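/- arXiv:1905.06507 — 6 statements merged into one kernel-verified Lean document; each statement's English description precedes it below -/
import Mathlib

section
/- Let r ≥ 3 and let x : (0,∞) → H be a twice continuously differentiable solution of the FISC-ODE ẍ(t) + (r/t)ẋ(t) + ∇f(x(t)) + ((r-3)/t)(‖ẋ(t)‖/‖∇f(x(t))‖)∇f(x(t)) = 0, with ∇f(x(t)) ≠ 0 for all t > 0. Then the Lyapunov function E(t) = ((ω-2ω²)t²/4)‖ẋ(t)‖² + (1/2)‖x(t) - x* + ω t ẋ(t)‖² + (ω t²/2)(f(x(t)) - f(x*)), where ω = 1/(r-1), is non-increasing: its derivative satisfies Ė(t) ≤ 0 for all t > 0. -/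
/-!
Differentiating `E` along the trajectory and substituting the ODE, the choice `ω = 1/(r-1)`
makes the velocity of the anchor `x - x* + ω t ẋ` a negative multiple of `∇f(x)`, and the
`t² ⟪∇f(x), ẋ⟫` terms cancel. What is left of `Ė` is `ω t` times a sum of three non-positive
terms: one controlled by Cauchy–Schwarz, `‖∇f(x)‖ ‖ẋ‖ + ⟪∇f(x), ẋ⟫ ≥ 0`, the other two by the
first-order convexity inequality `0 ≤ f(x) - f(x*) ≤ ⟪∇f(x), x - x*⟫`.
-/

open Set RealInnerProductSpace

theorem ConvexOn.add_le_of_hasFDerivAt {E : Type*} [NormedAddCommGroup E] [NormedSpace ℝ E]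
    {s : Set E} {f : E → ℝ} {f' : E →L[ℝ] ℝ} {a b : E} (hf : ConvexOn ℝ s f)
    (ha : a ∈ s) (hb : b ∈ s) (hfa : HasFDerivAt f f' a) : f a + f' (b - a) ≤ f b := by
  let L : ℝ →ᵃ[ℝ] E := AffineMap.lineMap a b
  have hL : HasDerivAt L (b - a) 0 := AffineMap.hasDerivAt_lineMap
  have hφ : HasDerivAt (f ∘ L) (f' (b - a)) 0 :=
    (by simpa [L] using hfa : HasFDerivAt f f' (L 0)).comp_hasDerivAt 0 hL
  have := (hf.comp_affineMap L).le_slope_of_hasDerivAt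
    (by simpa [L] using ha) (by simpa [L] using hb) one_pos hφ
  simp only [slope_def_field, Function.comp_apply, L, AffineMap.lineMap_apply_zero,
    AffineMap.lineMap_apply_one, sub_zero, div_one] at this
  linarith

theorem ConvexOn.add_inner_le_of_hasGradientAt {E : Type*} [NormedAddCommGroup E]
    [InnerProductSpace ℝ E] [CompleteSpace E] {s : Set E} {f : E → ℝ} {g a b : E}
    (hf : ConvexOn ℝ s f) (ha : a ∈ s) (hb : b ∈ s) (hfa : HasGradientAt f g a) :
    f a + ⟪g, b - a⟫ ≤ f b := by
  simpa using hf.add_le_of_hasFDerivAt ha hb (hasGradientAt_iff_hasFDerivAt.mp hfa)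

section FiscLyapunov

variable {H : Type*} [NormedAddCommGroup H] [InnerProductSpace ℝ H]

noncomputable def fiscLyapunov (f : H → ℝ) (xstar : H) (ω : ℝ) (x v : ℝ → H) (t : ℝ) : ℝ :=
  ((ω - 2 * ω ^ 2) * t ^ 2 / 4) * ‖v t‖ ^ 2 + (1 / 2) * ‖x t - xstar + (ω * t) • v t‖ ^ 2
    + (ω * t ^ 2 / 2) * (f (x t) - f xstar)

theorem hasDerivAt_fiscLyapunov [CompleteSpace H] {f : H → ℝ} {g xstar a : H} {ω t : ℝ}
    {x v : ℝ → H} (hx : HasDerivAt x (v t) t) (hv : HasDerivAt v a t)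
    (hf : HasGradientAt f g (x t)) :
    HasDerivAt (fiscLyapunov f xstar ω x v)
      ((ω - 2 * ω ^ 2) / 2 * t * (‖v t‖ ^ 2 + t * ⟪v t, a⟫)
        + ⟪x t - xstar + (ω * t) • v t, (1 + ω) • v t + (ω * t) • a⟫
        + ω * t * (f (x t) - f xstar) + ω * t ^ 2 / 2 * ⟪g, v t⟫) t := by
  have hsq : HasDerivAt (fun s : ℝ => s ^ 2) (2 * t) t := by simpa using hasDerivAt_pow 2 t
  have hw : HasDerivAt (fun s => x s - xstar + (ω * s) • v s)
      ((1 + ω) • v t + (ω * t) • a) t :=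
    ((hx.sub_const xstar).add (((hasDerivAt_id t).const_mul ω).smul hv)).congr_deriv
      (by simp only [id, mul_one]; module)
  have hfx : HasDerivAt (fun s => f (x s)) ⟪g, v t⟫ t := by
    have := (hasGradientAt_iff_hasFDerivAt.mp hf).comp_hasDerivAt t hx
    simp only [InnerProductSpace.toDual_apply_apply] at this
    exact this
  exact ((((hsq.const_mul (ω - 2 * ω ^ 2)).div_const 4).mul hv.norm_sq).add
    (hw.norm_sq.const_mul (1 / 2))).add
    (((hsq.const_mul ω).div_const 2).mul (hfx.sub_const (f xstar))) |>.congr_deriv (by ring)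

theorem fiscLyapunov_deriv_eq_of_ode {g X V A : H} {F r ω t β : ℝ} (hω : ω * (r - 1) = 1)
    (ht : t ≠ 0) (hode : A + (r / t) • V + g + β • g = 0) :
    (ω - 2 * ω ^ 2) / 2 * t * (‖V‖ ^ 2 + t * ⟪V, A⟫)
        + ⟪X + (ω * t) • V, (1 + ω) • V + (ω * t) • A⟫ + ω * t * F + ω * t ^ 2 / 2 * ⟪g, V⟫
      = ω * t * (-(r - 3) / 2 * ‖V‖ ^ 2 - β * (t / 2 * ⟪g, V⟫ + ⟪g, X⟫) - (⟪g, X⟫ - F)) := by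
  have hA : A = -(r / t) • V - (1 + β) • g := by linear_combination (norm := module) hode
  have hωr : ω * t * (r / t) = 1 + ω := by field_simp; linarith
  have hw : (1 + ω) • V + (ω * t) • A = -(ω * t * (1 + β)) • g := by
    calc (1 + ω) • V + (ω * t) • A
        = (1 + ω - ω * t * (r / t)) • V - (ω * t * (1 + β)) • g := by rw [hA]; module
      _ = _ := by rw [hωr]; simp
  have hVA : t * ⟪V, A⟫ = -(r * ‖V‖ ^ 2) - t * (1 + β) * ⟪g, V⟫ := by
    rw [hA, inner_sub_right, inner_smul_right, inner_smul_right, real_inner_self_eq_norm_sq,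
      real_inner_comm]
    field_simp
  rw [hw, hVA, inner_smul_right, inner_add_left, real_inner_smul_left,
    real_inner_comm V, real_inner_comm g X]
  linear_combination (t * ‖V‖ ^ 2 * ω) * hω

end FiscLyapunov

theorem fiscLyapunov_deriv_factor_nonpos {r t U G B C F : ℝ} (hr : 3 ≤ r) (ht : 0 < t)
    (hG : 0 < G) (hU : 0 ≤ U) (hB : -(G * U) ≤ B) (hF : 0 ≤ F) (hFC : F ≤ C) :
    -(r - 3) / 2 * U ^ 2 - (r - 3) / t * (U / G) * (t / 2 * B + C) - (C - F) ≤ 0 := by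
  have hsplit : -(r - 3) / 2 * U ^ 2 - (r - 3) / t * (U / G) * (t / 2 * B + C)
      = -((r - 3) * U / (2 * G) * (G * U + B)) - (r - 3) / t * (U / G) * C := by
    field_simp
    ring
  have hr₃ : 0 ≤ r - 3 := by linarith
  have h₁ : 0 ≤ (r - 3) * U / (2 * G) * (G * U + B) :=
    mul_nonneg (by positivity) (by linarith)
  have h₂ : 0 ≤ (r - 3) / t * (U / G) * C := mul_nonneg (by positivity) (by linarith)
  rw [hsplit]
  linarith

theorem fisc_ode_lyapunov_nonincreasing_general {H : Type*} [NormedAddCommGroup H]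
    [InnerProductSpace ℝ H] [CompleteSpace H]
    (f : H → ℝ) (f' : H → H)
    (hconv : ConvexOn ℝ Set.univ f)
    (hgrad : ∀ z, HasGradientAt f (f' z) z)
    (xstar : H) (hmin : ∀ z, f xstar ≤ f z)
    (r : ℝ) (hr : 3 ≤ r)
    (x x' x'' : ℝ → H)
    (hx' : ∀ t ∈ Ioi (0 : ℝ), HasDerivAt x (x' t) t)
    (hx'' : ∀ t ∈ Ioi (0 : ℝ), HasDerivAt x' (x'' t) t)
    (hgradne : ∀ t ∈ Ioi (0 : ℝ), f' (x t) ≠ 0)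
    (hode : ∀ t ∈ Ioi (0 : ℝ),
      x'' t + (r / t) • x' t + f' (x t)
        + ((r - 3) / t) • ((‖x' t‖ / ‖f' (x t)‖) • f' (x t)) = 0)
    (ω : ℝ) (hω : ω = 1 / (r - 1))
    (E : ℝ → ℝ)
    (hE : ∀ t, E t = ((ω - 2 * ω ^ 2) * t ^ 2 / 4) * ‖x' t‖ ^ 2
        + (1 / 2) * ‖x t - xstar + (ω * t) • x' t‖ ^ 2
        + (ω * t ^ 2 / 2) * (f (x t) - f xstar)) :
    ∀ t ∈ Ioi (0 : ℝ), deriv E t ≤ 0 := by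
  intro t ht
  have ht₀ : 0 < t := ht
  set g := f' (x t)
  have hg : 0 < ‖g‖ := norm_pos_iff.2 (hgradne t ht)
  have hω₀ : 0 ≤ ω := by rw [hω]; exact one_div_nonneg.2 (by linarith)
  have hωr : ω * (r - 1) = 1 := by rw [hω]; field_simp [show r - 1 ≠ 0 by linarith]
  have hode' : x'' t + (r / t) • x' t + g + ((r - 3) / t * (‖x' t‖ / ‖g‖)) • g = 0 := by
    simpa only [smul_smul] using hode t ht
  have hderiv :=
    hasDerivAt_fiscLyapunov (xstar := xstar) (ω := ω) (hx' t ht) (hx'' t ht) (hgrad (x t))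
  rw [fiscLyapunov_deriv_eq_of_ode hωr ht₀.ne' hode'] at hderiv
  rw [show E = fiscLyapunov f xstar ω x x' from funext hE, hderiv.deriv]
  have hgap : f (x t) - f xstar ≤ ⟪g, x t - xstar⟫ := by
    have := hconv.add_inner_le_of_hasGradientAt (mem_univ _) (mem_univ xstar) (hgrad (x t))
    rw [← neg_sub, inner_neg_right] at this
    linarith
  exact mul_nonpos_of_nonneg_of_nonpos (mul_nonneg hω₀ ht₀.le)
    (fiscLyapunov_deriv_factor_nonpos hr ht₀ hg (norm_nonneg _)
      (neg_le_of_abs_le (abs_real_inner_le_norm _ _)) (sub_nonneg.2 (hmin _)) hgap)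

/-- Lyapunov function for the FISC-ODE: if `x` is a twice continuously differentiable
solution of `ẍ + (r/t)ẋ + ∇f(x) + ((r-3)/t)(‖ẋ‖/‖∇f(x)‖)∇f(x) = 0` on `(0,∞)`
with `∇f(x(t)) ≠ 0`, then the Lyapunov function
`E(t) = ((ω-2ω²)t²/4)‖ẋ‖² + (1/2)‖x - x* + ωtẋ‖² + (ωt²/2)(f(x) - f(x*))`,
with `ω = 1/(r-1)`, has non-positive derivative on `(0,∞)`. -/
theorem fisc_ode_lyapunov_nonincreasing {H : Type*} [NormedAddCommGroup H]
    [InnerProductSpace ℝ H] [CompleteSpace H]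
    (f : H → ℝ) (f' : H → H)
    (hconv : ConvexOn ℝ Set.univ f)
    (hgrad : ∀ z, HasGradientAt f (f' z) z)
    (hbdd : BddBelow (Set.range f))
    (xstar : H) (hmin : ∀ z, f xstar ≤ f z)
    (huniq : ∀ z, (∀ w, f z ≤ f w) → z = xstar)
    (r : ℝ) (hr : 3 ≤ r)
    (x x' x'' : ℝ → H)
    (hx' : ∀ t ∈ Ioi (0 : ℝ), HasDerivAt x (x' t) t)
    (hx'' : ∀ t ∈ Ioi (0 : ℝ), HasDerivAt x' (x'' t) t)
    (hx''cont : ContinuousOn x'' (Ioi 0))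
    (hgradne : ∀ t ∈ Ioi (0 : ℝ), f' (x t) ≠ 0)
    (hode : ∀ t ∈ Ioi (0 : ℝ),
      x'' t + (r / t) • x' t + f' (x t)
        + ((r - 3) / t) • ((‖x' t‖ / ‖f' (x t)‖) • f' (x t)) = 0)
    (ω : ℝ) (hω : ω = 1 / (r - 1))
    (E : ℝ → ℝ)
    (hE : ∀ t, E t = ((ω - 2 * ω ^ 2) * t ^ 2 / 4) * ‖x' t‖ ^ 2
        + (1 / 2) * ‖x t - xstar + (ω * t) • x' t‖ ^ 2
        + (ω * t ^ 2 / 2) * (f (x t) - f xstar)) :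
    ∀ t ∈ Ioi (0 : ℝ), deriv E t ≤ 0 :=
  fisc_ode_lyapunov_nonincreasing_general f f' hconv hgrad xstar hmin r hr x x' x'' hx' hx'' hgradne
    hode ω hω E hE
end

section
/- Let r ≥ 3 and let x : [0,∞) → H be a twice continuously differentiable solution of the FISC-ODE ẍ(t) + (r/t)ẋ(t) + ∇f(x(t)) + ((r-3)/t)(‖ẋ(t)‖/‖∇f(x(t))‖)∇f(x(t)) = 0 on (0,∞), with ∇f(x(t)) ≠ 0 for all t > 0, satisfying the initial conditions x(0) = x₀ and ẋ(0) = 0. Then for all t > 0, f(x(t)) - f(x*) ≤ (r-1)‖x₀ - x*‖²/t². -/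
/-!
The energy
`E(t) = (r-1) t² (f(x) - f(x*)) + ‖(r-1)(x - x*) + t ẋ‖² + (r-3)/2 · t² ‖ẋ‖²`
is nonincreasing along the trajectory. Substituting the ODE into `Ė` leaves
`2(r-1) t (f(x) - f(x*) - ⟪x - x*, ∇f(x)⟫)`, which is `≤ 0` by convexity, minus `(r-1)(r-3)`
times `2w⟪x - x*, ∇f(x)⟫ + t (w⟪ẋ, ∇f(x)⟫ + ‖ẋ‖²)` with `w = ‖ẋ‖ / ‖∇f(x)‖`, which is `≥ 0`
by convexity, minimality of `x*` and Cauchy–Schwarz. Hence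
`(r-1) t² (f(x(t)) - f(x*)) ≤ E(t) ≤ E(0) = (r-1)² ‖x₀ - x*‖²`.
-/

open Set
open scoped RealInnerProductSpace

section Gradient

variable {H : Type*} [NormedAddCommGroup H] [InnerProductSpace ℝ H] [CompleteSpace H]

theorem HasGradientAt.comp_hasDerivAt {f : H → ℝ} {g v : H} {γ : ℝ → H} {t : ℝ}
    (hf : HasGradientAt f g (γ t)) (hγ : HasDerivAt γ v t) :
    HasDerivAt (f ∘ γ) ⟪g, v⟫ t := by
  have := (hasGradientAt_iff_hasFDerivAt.mp hf).comp_hasDerivAt t hγ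
  rwa [InnerProductSpace.toDual_apply_apply] at this

theorem ConvexOn.add_inner_le_of_hasGradientAt_s1 {f : H → ℝ} (hf : ConvexOn ℝ univ f) {a b g : H}
    (hg : HasGradientAt f g a) : f a + ⟪g, b - a⟫ ≤ f b := by
  have hline : ConvexOn ℝ univ (f ∘ AffineMap.lineMap (k := ℝ) a b) := hf.comp_affineMap _
  have hderiv : HasDerivAt (f ∘ AffineMap.lineMap (k := ℝ) a b) ⟪g, b - a⟫ 0 :=
    HasGradientAt.comp_hasDerivAt (by simpa using hg) AffineMap.hasDerivAt_lineMap
  have := hline.le_slope_of_hasDerivAt (mem_univ 0) (mem_univ 1) one_pos hderiv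
  simp only [slope_def_field, Function.comp_apply, AffineMap.lineMap_apply_one,
    AffineMap.lineMap_apply_zero, sub_zero, div_one] at this
  linarith

end Gradient

theorem neg_sq_norm_le_div_norm_mul_inner {H : Type*} [NormedAddCommGroup H]
    [InnerProductSpace ℝ H] (v g : H) : -‖v‖ ^ 2 ≤ ‖v‖ / ‖g‖ * ⟪v, g⟫ := by
  rcases eq_or_ne g 0 with rfl | hg
  · simp
  calc -‖v‖ ^ 2 = ‖v‖ / ‖g‖ * -(‖v‖ * ‖g‖) := by field_simp
    _ ≤ ‖v‖ / ‖g‖ * ⟪v, g⟫ :=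
      mul_le_mul_of_nonneg_left (neg_le_of_abs_le (abs_real_inner_le_norm v g)) (by positivity)

section Energy

variable {H : Type*} [NormedAddCommGroup H] [InnerProductSpace ℝ H]

noncomputable def fiscEnergy (f : H → ℝ) (xstar : H) (r : ℝ) (x v : ℝ → H) (t : ℝ) : ℝ :=
  (r - 1) * t ^ 2 * (f (x t) - f xstar) + ‖(r - 1) • (x t - xstar) + t • v t‖ ^ 2
    + (r - 3) / 2 * t ^ 2 * ‖v t‖ ^ 2

variable {f : H → ℝ} {xstar : H} {r : ℝ} {x v : ℝ → H}

theorem fiscEnergy_zero : fiscEnergy f xstar r x v 0 = (r - 1) ^ 2 * ‖x 0 - xstar‖ ^ 2 := by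
  simp [fiscEnergy, norm_smul, mul_pow]

theorem mul_sub_le_fiscEnergy (hr : 3 ≤ r) (t : ℝ) :
    (r - 1) * t ^ 2 * (f (x t) - f xstar) ≤ fiscEnergy f xstar r x v t := by
  have hkin : 0 ≤ (r - 3) / 2 * t ^ 2 * ‖v t‖ ^ 2 :=
    mul_nonneg (mul_nonneg (by linarith) (sq_nonneg t)) (sq_nonneg _)
  unfold fiscEnergy
  linarith [sq_nonneg ‖(r - 1) • (x t - xstar) + t • v t‖]

theorem continuousOn_fiscEnergy {s : Set ℝ} (hf : Continuous f) (hx : ContinuousOn x s)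
    (hv : ContinuousOn v s) : ContinuousOn (fiscEnergy f xstar r x v) s := by
  unfold fiscEnergy
  fun_prop

theorem hasDerivAt_fiscEnergy [CompleteSpace H] {a g : H} {t : ℝ} (ht : t ≠ 0)
    (hx : HasDerivAt x (v t) t) (hv : HasDerivAt v a t) (hg : HasGradientAt f g (x t))
    (hode : a + (r / t) • v t + g + ((r - 3) / t) • ((‖v t‖ / ‖g‖) • g) = 0) :
    HasDerivAt (fiscEnergy f xstar r x v)
      (2 * (r - 1) * t * (f (x t) - f xstar - ⟪x t - xstar, g⟫)
        - (r - 1) * (r - 3) * (2 * (‖v t‖ / ‖g‖) * ⟪x t - xstar, g⟫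
          + t * (‖v t‖ / ‖g‖ * ⟪v t, g⟫ + ‖v t‖ ^ 2))) t := by
  have hfx := (hg.comp_hasDerivAt hx).sub_const (f xstar)
  have hu := ((hx.sub_const xstar).const_smul (r - 1)).add ((hasDerivAt_id t).smul hv)
  have hE := ((((hasDerivAt_pow 2 t).const_mul (r - 1)).mul hfx).add hu.norm_sq).add
    (((hasDerivAt_pow 2 t).const_mul ((r - 3) / 2)).mul hv.norm_sq)
  refine (show HasDerivAt (fiscEnergy f xstar r x v) _ t from hE).congr_deriv ?_
  have ha : a = -((r / t) • v t) - g - ((r - 3) / t * (‖v t‖ / ‖g‖)) • g := by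
    rw [smul_smul] at hode
    linear_combination (norm := module) hode
  subst ha
  simp only [Pi.add_apply, Pi.smul_apply, Pi.smul_apply', Function.comp_apply, id,
    inner_add_left, inner_add_right, inner_sub_left, inner_sub_right, inner_neg_right,
    real_inner_smul_left, real_inner_smul_right, real_inner_self_eq_norm_sq]
  rw [real_inner_comm (v t) g]
  field_simp
  ring

theorem fiscEnergy_antitoneOn [CompleteSpace H] {f' : H → H} {a : ℝ → H}
    (hconv : ConvexOn ℝ univ f) (hgrad : ∀ z, HasGradientAt f (f' z) z)
    (hmin : ∀ z, f xstar ≤ f z) (hr : 3 ≤ r)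
    (hx : ∀ t ∈ Ici (0 : ℝ), HasDerivWithinAt x (v t) (Ici 0) t)
    (hv : ∀ t ∈ Ici (0 : ℝ), HasDerivWithinAt v (a t) (Ici 0) t)
    (hode : ∀ t ∈ Ioi (0 : ℝ),
      a t + (r / t) • v t + f' (x t) + ((r - 3) / t) • ((‖v t‖ / ‖f' (x t)‖) • f' (x t)) = 0) :
    AntitoneOn (fiscEnergy f xstar r x v) (Ici 0) := by
  have hf : Continuous f :=
    continuous_iff_continuousAt.2 fun z => (hgrad z).differentiableAt.continuousAt
  have hcont : ContinuousOn (fiscEnergy f xstar r x v) (Ici 0) :=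
    continuousOn_fiscEnergy hf (fun t ht => (hx t ht).continuousWithinAt)
      (fun t ht => (hv t ht).continuousWithinAt)
  have hderiv (t : ℝ) (ht : 0 < t) := hasDerivAt_fiscEnergy (xstar := xstar) ht.ne'
    ((hx t ht.le).hasDerivAt (Ici_mem_nhds ht)) ((hv t ht.le).hasDerivAt (Ici_mem_nhds ht))
    (hgrad _) (hode t ht)
  refine antitoneOn_of_deriv_nonpos (convex_Ici 0) hcont ?_ ?_ <;> rw [interior_Ici]
  · exact fun t ht => (hderiv t ht).differentiableAt.differentiableWithinAt
  intro t ht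
  rw [(hderiv t ht).deriv]
  set g := f' (x t)
  have hgap : f (x t) - f xstar ≤ ⟪x t - xstar, g⟫ := by
    have := hconv.add_inner_le_of_hasGradientAt_s1 (b := xstar) (hgrad (x t))
    rw [← neg_sub, inner_neg_right, real_inner_comm] at this
    linarith
  have hgap_nonneg : 0 ≤ ⟪x t - xstar, g⟫ := (sub_nonneg.2 (hmin _)).trans hgap
  have hkin : 0 ≤ ‖v t‖ / ‖g‖ * ⟪v t, g⟫ + ‖v t‖ ^ 2 := by
    linarith [neg_sq_norm_le_div_norm_mul_inner (v t) g]
  have hconvex_part : 2 * (r - 1) * t * (f (x t) - f xstar - ⟪x t - xstar, g⟫) ≤ 0 :=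
    mul_nonpos_of_nonneg_of_nonpos
      (mul_nonneg (mul_nonneg zero_le_two (by linarith)) (le_of_lt ht)) (by linarith)
  have hdamping_part : 0 ≤ (r - 1) * (r - 3) * (2 * (‖v t‖ / ‖g‖) * ⟪x t - xstar, g⟫
      + t * (‖v t‖ / ‖g‖ * ⟪v t, g⟫ + ‖v t‖ ^ 2)) := by
    refine mul_nonneg (mul_nonneg (by linarith) (by linarith))
      (add_nonneg ?_ (mul_nonneg ht.le hkin))
    exact mul_nonneg (mul_nonneg zero_le_two (by positivity)) hgap_nonneg
  linarith

end Energy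

theorem fisc_ode_convergence_rate_general {H : Type*} [NormedAddCommGroup H]
    [InnerProductSpace ℝ H] [CompleteSpace H]
    (f : H → ℝ) (f' : H → H)
    (hconv : ConvexOn ℝ Set.univ f)
    (hgrad : ∀ z, HasGradientAt f (f' z) z)
    (xstar : H) (hmin : ∀ z, f xstar ≤ f z)
    (r : ℝ) (hr : 3 ≤ r)
    (x x' x'' : ℝ → H)
    (hx' : ∀ t ∈ Ici (0 : ℝ), HasDerivWithinAt x (x' t) (Ici 0) t)
    (hx'' : ∀ t ∈ Ici (0 : ℝ), HasDerivWithinAt x' (x'' t) (Ici 0) t)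
    (hode : ∀ t ∈ Ioi (0 : ℝ),
      x'' t + (r / t) • x' t + f' (x t)
        + ((r - 3) / t) • ((‖x' t‖ / ‖f' (x t)‖) • f' (x t)) = 0)
    (x₀ : H) (hx0 : x 0 = x₀) :
    ∀ t ∈ Ioi (0 : ℝ), f (x t) - f xstar ≤ (r - 1) * ‖x₀ - xstar‖ ^ 2 / t ^ 2 := by
  intro t ht
  have hdecay := fiscEnergy_antitoneOn hconv hgrad hmin hr hx' hx'' hode self_mem_Ici
    (mem_Ici.2 ht.le) ht.le
  rw [fiscEnergy_zero, hx0] at hdecay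
  have hlow := mul_sub_le_fiscEnergy (f := f) (xstar := xstar) (x := x) (v := x') hr t
  rw [le_div_iff₀ (pow_pos ht 2)]
  refine le_of_mul_le_mul_left ?_ (by linarith : (0 : ℝ) < r - 1)
  linarith

/-- `O(1/t²)` convergence rate of the FISC-ODE: if `x` is a twice continuously
differentiable solution of `ẍ + (r/t)ẋ + ∇f(x) + ((r-3)/t)(‖ẋ‖/‖∇f(x)‖)∇f(x) = 0`
on `(0,∞)` with initial conditions `x(0) = x₀`, `ẋ(0) = 0`, then for all `t > 0`,
`f(x(t)) - f(x*) ≤ (r-1)‖x₀ - x*‖²/t²`. -/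
theorem fisc_ode_convergence_rate {H : Type*} [NormedAddCommGroup H]
    [InnerProductSpace ℝ H] [CompleteSpace H]
    (f : H → ℝ) (f' : H → H)
    (hconv : ConvexOn ℝ Set.univ f)
    (hgrad : ∀ z, HasGradientAt f (f' z) z)
    (hbdd : BddBelow (Set.range f))
    (xstar : H) (hmin : ∀ z, f xstar ≤ f z)
    (huniq : ∀ z, (∀ w, f z ≤ f w) → z = xstar)
    (r : ℝ) (hr : 3 ≤ r)
    (x x' x'' : ℝ → H)
    (hx' : ∀ t ∈ Ici (0 : ℝ), HasDerivWithinAt x (x' t) (Ici 0) t)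
    (hx'' : ∀ t ∈ Ici (0 : ℝ), HasDerivWithinAt x' (x'' t) (Ici 0) t)
    (hx''cont : ContinuousOn x'' (Ici 0))
    (hgradne : ∀ t ∈ Ioi (0 : ℝ), f' (x t) ≠ 0)
    (hode : ∀ t ∈ Ioi (0 : ℝ),
      x'' t + (r / t) • x' t + f' (x t)
        + ((r - 3) / t) • ((‖x' t‖ / ‖f' (x t)‖) • f' (x t)) = 0)
    (x₀ : H) (hx0 : x 0 = x₀) (hv0 : x' 0 = 0) :
    ∀ t ∈ Ioi (0 : ℝ), f (x t) - f xstar ≤ (r - 1) * ‖x₀ - xstar‖ ^ 2 / t ^ 2 :=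
  fisc_ode_convergence_rate_general f f' hconv hgrad xstar hmin r hr x x' x'' hx' hx'' hode x₀ hx0
end

section
/- Let u, g ∈ H with g ≠ 0, let 0 ≤ β ≤ 1 and 0 ≤ γ ≤ 1, and suppose the restarting criterion holds: ⟨-g, u⟩ ≥ 0. Define the corrected search direction u' = (1-β)u - γ(‖u‖/‖g‖)g - g. Then ⟨u', -g⟩ ≥ ‖g‖². (In particular, with g = ∇f(x_k) and u = u_k, the SDC update u_{k+1} satisfies ⟨u_{k+1}, -∇f(x_k)⟩ ≥ ‖∇f(x_k)‖²; the same inequality holds trivially for the restart update u' = -g.) -/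
open RealInnerProductSpace

section DescentDirection

variable {H : Type*} [NormedAddCommGroup H] [InnerProductSpace ℝ H]

theorem inner_smul_sub_smul_sub_neg (u g : H) (a c : ℝ) :
    ⟪a • u - c • g - g, -g⟫ = a * ⟪-g, u⟫ + (c + 1) * ‖g‖ ^ 2 := by
  simp only [inner_sub_left, inner_smul_left, inner_neg_right, inner_neg_left,
    real_inner_comm u g, real_inner_self_eq_norm_sq, conj_trivial]
  ring

theorem sq_norm_le_inner_smul_sub_smul_sub_neg {u g : H} {a c : ℝ} (ha : 0 ≤ a) (hc : 0 ≤ c)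
    (hgu : 0 ≤ ⟪-g, u⟫) : ‖g‖ ^ 2 ≤ ⟪a • u - c • g - g, -g⟫ := by
  rw [inner_smul_sub_smul_sub_neg]
  nlinarith [mul_nonneg ha hgu, mul_nonneg hc (sq_nonneg ‖g‖)]

end DescentDirection

theorem sdc_descent_direction_general {H : Type*} [NormedAddCommGroup H] [InnerProductSpace ℝ H]
    (u g : H) (β γ : ℝ)
    (hβ1 : β ≤ 1) (hγ0 : 0 ≤ γ)
    (hrst : ⟪-g, u⟫ ≥ 0) :
    ⟪(1 - β) • u - (γ * (‖u‖ / ‖g‖)) • g - g, -g⟫ ≥ ‖g‖ ^ 2 :=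
  sq_norm_le_inner_smul_sub_smul_sub_neg (sub_nonneg.mpr hβ1) (by positivity) hrst

/-- One-step form of the SDC velocity update: if the restarting criterion
`⟪-g, u⟫ ≥ 0` holds, then the corrected search direction
`u' = (1-β)u - γ(‖u‖/‖g‖)g - g` satisfies `⟪u', -g⟫ ≥ ‖g‖²`. -/
theorem sdc_descent_direction {H : Type*} [NormedAddCommGroup H] [InnerProductSpace ℝ H]
    (u g : H) (hg : g ≠ 0) (β γ : ℝ)
    (hβ0 : 0 ≤ β) (hβ1 : β ≤ 1) (hγ0 : 0 ≤ γ) (hγ1 : γ ≤ 1)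
    (hrst : ⟪-g, u⟫ ≥ 0) :
    ⟪(1 - β) • u - (γ * (‖u‖ / ‖g‖)) • g - g, -g⟫ ≥ ‖g‖ ^ 2 :=
  sdc_descent_direction_general u g β γ hβ1 hγ0 hrst
end

section
/- Let d_f > 1 and let K' be a positive integer. Let (x_k) and (u_k) be sequences in H with ∇f(x_k) ≠ 0 for 0 ≤ k ≤ K', with u₁ = -∇f(x₀), and suppose that for every 1 ≤ k ≤ K' both ⟨-∇f(x_k), u_k⟩ ≥ 0 and d_f‖∇f(x_k)‖ ≥ ‖∇f(x_{k-1})‖ hold, and u_{k+1} = (1-β_k)u_k - γ_k(‖u_k‖/‖∇f(x_k)‖)∇f(x_k) - ∇f(x_k) with 0 ≤ β_k ≤ 1 and 0 ≤ γ_k ≤ 1. Define λ_k = ‖u_{k+1}‖/‖∇f(x_k)‖ and the auxiliary sequence (λ̃_k) by λ̃₀ = 1 and λ̃_k = √(4 d_f² λ̃_{k-1}² + 4 d_f λ̃_{k-1} + 2). Then λ_k ≤ λ̃_k for all 0 ≤ k ≤ K'; in particular, ‖u_{k+1}‖/‖∇f(x_k)‖ is bounded above by λ̃_{K'} for all 0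 ≤ k ≤ K'. -/
/-!
By the triangle inequality, the update with `0 ≤ β, γ ≤ 1` gives
`‖u_{k+1}‖ ≤ 2‖u_k‖ + ‖∇f(x_k)‖`, and the gradient-ratio criterion turns the induction hypothesis
`‖u_k‖ ≤ λ̃_{k-1}‖∇f(x_{k-1})‖` into `‖u_k‖ ≤ d_f λ̃_{k-1}‖∇f(x_k)‖`. Hence
`λ_k ≤ 2 d_f λ̃_{k-1} + 1 ≤ λ̃_k`, because `λ̃_k² = (2 d_f λ̃_{k-1} + 1)² + 1`. Since `d_f ≥ 1/2`,
the sequence `λ̃` is increasing, which gives the uniform bound `λ̃_{K'}`.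
-/

lemma norm_sdc_update_le {E : Type*} [SeminormedAddCommGroup E] [NormedSpace ℝ E]
    {u g : E} {β γ : ℝ} (hβ : |1 - β| ≤ 1) (hγ : |γ| ≤ 1) :
    ‖(1 - β) • u - (γ * (‖u‖ / ‖g‖)) • g - g‖ ≤ 2 * ‖u‖ + ‖g‖ := by
  have hu : ‖(1 - β) • u‖ ≤ ‖u‖ := by
    rw [norm_smul, Real.norm_eq_abs]
    exact mul_le_of_le_one_left (norm_nonneg u) hβ
  have hg : ‖(γ * (‖u‖ / ‖g‖)) • g‖ ≤ ‖u‖ := by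
    have hscaled : ‖u‖ / ‖g‖ * ‖g‖ ≤ ‖u‖ := by
      rcases eq_or_ne ‖g‖ 0 with h | h
      · simp [h]
      · rw [div_mul_cancel₀ _ h]
    rw [norm_smul, norm_mul, mul_assoc, Real.norm_eq_abs, Real.norm_of_nonneg (by positivity)]
    exact (mul_le_of_le_one_left (by positivity) hγ).trans hscaled
  calc _ ≤ ‖(1 - β) • u - (γ * (‖u‖ / ‖g‖)) • g‖ + ‖g‖ := norm_sub_le _ _
    _ ≤ ‖(1 - β) • u‖ + ‖(γ * (‖u‖ / ‖g‖)) • g‖ + ‖g‖ := by gcongr; exact norm_sub_le _ _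
    _ ≤ 2 * ‖u‖ + ‖g‖ := by linarith

lemma two_mul_mul_add_one_le_sqrt (d t : ℝ) :
    2 * d * t + 1 ≤ √(4 * d ^ 2 * t ^ 2 + 4 * d * t + 2) :=
  Real.le_sqrt_of_sq_le (by nlinarith)

open RealInnerProductSpace

theorem sdc_direction_ratio_bounded_general {H : Type*} [NormedAddCommGroup H]
    [InnerProductSpace ℝ H]
    (f' : H → H)
    (d_f : ℝ) (hd : 1 < d_f) (K' : ℕ)
    (x u : ℕ → H) (β γ : ℕ → ℝ)
    (hu1 : u 1 = -f' (x 0))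
    (hratio : ∀ k, 1 ≤ k → k ≤ K' → d_f * ‖f' (x k)‖ ≥ ‖f' (x (k - 1))‖)
    (hβ : ∀ k, 1 ≤ k → k ≤ K' → 0 ≤ β k ∧ β k ≤ 1)
    (hγ : ∀ k, 1 ≤ k → k ≤ K' → 0 ≤ γ k ∧ γ k ≤ 1)
    (hupd : ∀ k, 1 ≤ k → k ≤ K' →
      u (k + 1) = (1 - β k) • u k - (γ k * (‖u k‖ / ‖f' (x k)‖)) • f' (x k) - f' (x k))
    (lamt : ℕ → ℝ)
    (hlamt0 : lamt 0 = 1)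
    (hlamt : ∀ k, 1 ≤ k →
      lamt k = Real.sqrt (4 * d_f ^ 2 * lamt (k - 1) ^ 2 + 4 * d_f * lamt (k - 1) + 2)) :
    (∀ k, k ≤ K' → ‖u (k + 1)‖ / ‖f' (x k)‖ ≤ lamt k) ∧
      (∀ k, k ≤ K' → ‖u (k + 1)‖ / ‖f' (x k)‖ ≤ lamt K') := by
  have hlamt_succ (k : ℕ) :
      lamt (k + 1) = √(4 * d_f ^ 2 * lamt k ^ 2 + 4 * d_f * lamt k + 2) :=
    hlamt (k + 1) k.succ_pos
  have hnonneg : ∀ k, 0 ≤ lamt k := by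
    rintro (_ | k)
    · simp [hlamt0]
    · rw [hlamt_succ]; positivity
  have hgrow (k : ℕ) : 2 * d_f * lamt k + 1 ≤ lamt (k + 1) :=
    (hlamt_succ k).symm ▸ two_mul_mul_add_one_le_sqrt d_f (lamt k)
  have hmono : Monotone lamt := monotone_nat_of_le_succ fun k ↦ by
    nlinarith [hgrow k, mul_nonneg (hnonneg k) (by linarith : (0 : ℝ) ≤ 2 * d_f - 1)]
  have hbound : ∀ k ≤ K', ‖u (k + 1)‖ ≤ lamt k * ‖f' (x k)‖ := by
    intro k
    induction k with
    | zero => intro _; simp [hu1, hlamt0]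
    | succ k ih =>
      intro hk
      obtain ⟨hβ₀, hβ₁⟩ := hβ (k + 1) k.succ_pos hk
      obtain ⟨hγ₀, hγ₁⟩ := hγ (k + 1) k.succ_pos hk
      have hgrad : ‖f' (x k)‖ ≤ d_f * ‖f' (x (k + 1))‖ := hratio (k + 1) k.succ_pos hk
      calc ‖u (k + 1 + 1)‖ ≤ 2 * ‖u (k + 1)‖ + ‖f' (x (k + 1))‖ := by
            rw [hupd (k + 1) k.succ_pos hk]
            exact norm_sdc_update_le (abs_le.2 ⟨by linarith, by linarith⟩)
              (abs_le.2 ⟨by linarith, hγ₁⟩)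
        _ ≤ 2 * (lamt k * (d_f * ‖f' (x (k + 1))‖)) + ‖f' (x (k + 1))‖ := by
            gcongr
            exact (ih (by omega)).trans (mul_le_mul_of_nonneg_left hgrad (hnonneg k))
        _ = (2 * d_f * lamt k + 1) * ‖f' (x (k + 1))‖ := by ring
        _ ≤ lamt (k + 1) * ‖f' (x (k + 1))‖ := by gcongr; exact hgrow k
  have hratio_le (k : ℕ) (hk : k ≤ K') : ‖u (k + 1)‖ / ‖f' (x k)‖ ≤ lamt k :=
    div_le_of_le_mul₀ (norm_nonneg _) (hnonneg k) (hbound k hk)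
  exact ⟨hratio_le, fun k hk ↦ (hratio_le k hk).trans (hmono hk)⟩

/-- Boundedness of `‖u_{k+1}‖/‖∇f(x_k)‖` for SDC iterations without restart:
if the restarting criterion and the gradient-ratio criterion hold for `1 ≤ k ≤ K'`,
then `λ_k = ‖u_{k+1}‖/‖∇f(x_k)‖` is dominated by the auxiliary sequence
`λ̃₀ = 1`, `λ̃_k = √(4 d_f² λ̃_{k-1}² + 4 d_f λ̃_{k-1} + 2)`. -/
theorem sdc_direction_ratio_bounded {H : Type*} [NormedAddCommGroup H]
    [InnerProductSpace ℝ H] [CompleteSpace H]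
    (f : H → ℝ) (f' : H → H)
    (hgrad : ∀ z, HasGradientAt f (f' z) z)
    (d_f : ℝ) (hd : 1 < d_f) (K' : ℕ) (hK' : 1 ≤ K')
    (x u : ℕ → H) (β γ : ℕ → ℝ)
    (hne : ∀ k, k ≤ K' → f' (x k) ≠ 0)
    (hu1 : u 1 = -f' (x 0))
    (hrst : ∀ k, 1 ≤ k → k ≤ K' → ⟪-f' (x k), u k⟫ ≥ 0)
    (hratio : ∀ k, 1 ≤ k → k ≤ K' → d_f * ‖f' (x k)‖ ≥ ‖f' (x (k - 1))‖)
    (hβ : ∀ k, 1 ≤ k → k ≤ K' → 0 ≤ β k ∧ β k ≤ 1)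
    (hγ : ∀ k, 1 ≤ k → k ≤ K' → 0 ≤ γ k ∧ γ k ≤ 1)
    (hupd : ∀ k, 1 ≤ k → k ≤ K' →
      u (k + 1) = (1 - β k) • u k - (γ k * (‖u k‖ / ‖f' (x k)‖)) • f' (x k) - f' (x k))
    (lamt : ℕ → ℝ)
    (hlamt0 : lamt 0 = 1)
    (hlamt : ∀ k, 1 ≤ k →
      lamt k = Real.sqrt (4 * d_f ^ 2 * lamt (k - 1) ^ 2 + 4 * d_f * lamt (k - 1) + 2)) :
    (∀ k, k ≤ K' → ‖u (k + 1)‖ / ‖f' (x k)‖ ≤ lamt k) ∧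
      (∀ k, k ≤ K' → ‖u (k + 1)‖ / ‖f' (x k)‖ ≤ lamt K') :=
  sdc_direction_ratio_bounded_general f' d_f hd K' x u β γ hu1 hratio hβ hγ hupd lamt hlamt0 hlamt
end

section
/- Under the FISC-ns recursion, for every k ≥ 1 the following identity holds: w_k = (φ_k/(r-1))Δx_k + α r_{k-1} + ξ_k s∇f(y_{k-1}). -/
/-!
Clearing the denominator of the momentum step gives
`(k - 2 + r) (Δx_k + s ∇f(y_{k-1})) = (k - 2) Δx_{k-1} - (r - 3) r_{k-1}`,
while `w_k = ((k - 1) Δx_k + (k - 2) Δx_{k-1}) / (r - 1)` by definition of `z`.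
Adding `(k - 2 + r) / (r - 1)` times the first identity to the second, the `Δx_{k-1}` terms cancel.
-/

open scoped Classical

section MomentumStep

variable {𝕜 E : Type*} [Field 𝕜] [AddCommGroup E] [Module 𝕜 E]

theorem smul_momentum_step_eq {t r s : 𝕜} (ht : t + r ≠ 0) {x x' d ρ g : E}
    (h : x' = x + (t / (t + r)) • d - ((r - 3) / (t + r)) • ρ - s • g) :
    (t + r) • (x' - x + s • g) = t • d - (r - 3) • ρ := by
  rw [h]
  match_scalars <;> field_simp <;> ring

theorem extrapolated_sum_eq_of_smul_momentum_step {t r s : 𝕜} (hr : r - 1 ≠ 0)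
    {d d' ρ g : E} (h : (t + r) • (d' + s • g) = t • d - (r - 3) • ρ) :
    ((t + 1) / (r - 1)) • d' + (t / (r - 1)) • d
      = ((2 * t + r + 1) / (r - 1)) • d' + ((r - 3) / (r - 1)) • ρ
        + ((t + r) / (r - 1) * s) • g := by
  linear_combination (norm := skip) (-(r - 1)⁻¹) • h
  match_scalars <;> field_simp <;> ring

end MomentumStep

theorem fisc_ns_w_identity_general {H : Type*} [NormedAddCommGroup H]
    [InnerProductSpace ℝ H]
    (f' : H → H)
    (r s : ℝ) (hr : 3 ≤ r)
    -- FISC-ns sequences; `x k` for `k : ℕ` denotes `x_k`, and `x (k-1)` with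
    -- truncated subtraction encodes `x_{-1} = x₀` at `k = 0`.
    (x y rk : ℕ → H)
    (hy : ∀ k : ℕ, y k = x k + (((k : ℝ) - 1) / ((k : ℝ) - 1 + r)) • (x k - x (k - 1))
        - ((r - 3) / ((k : ℝ) - 1 + r)) • rk k)
    (hx : ∀ k : ℕ, x (k + 1) = y k - s • f' (y k))
    (z w : ℕ → H)
    (hz : ∀ k : ℕ, z k = x k + (((k : ℝ) - 1) / (r - 1)) • (x k - x (k - 1)))
    (hw : ∀ k : ℕ, w k = z k + z (k - 1) - x k - x (k - 1))
    (k : ℕ) (hk : 1 ≤ k) :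
    w k = ((2 * (k : ℝ) + r - 3) / (r - 1)) • (x k - x (k - 1))
        + ((r - 3) / (r - 1)) • rk (k - 1)
        + (((((k : ℝ) + r - 2) / (r - 1)) * s) • f' (y (k - 1))) := by
  obtain ⟨m, rfl⟩ : ∃ m, k = m + 1 := ⟨k - 1, by omega⟩
  have ht : (m : ℝ) - 1 + r ≠ 0 := by
    have : (0 : ℝ) ≤ m := m.cast_nonneg
    exact (show (0 : ℝ) < m - 1 + r by linarith).ne'
  have hstep := smul_momentum_step_eq ht (x' := x (m + 1)) (g := f' (y m)) (s := s)
    (by rw [hx, hy m])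
  have hw_sum : w (m + 1) = ((((m : ℝ) - 1) + 1) / (r - 1)) • (x (m + 1) - x m)
      + (((m : ℝ) - 1) / (r - 1)) • (x m - x (m - 1)) := by
    rw [hw, hz, hz]
    push_cast
    module
  rw [hw_sum, extrapolated_sum_eq_of_smul_momentum_step (by linarith) hstep]
  push_cast
  congr 3 <;> ring

theorem fisc_ns_w_identity {H : Type*} [NormedAddCommGroup H]
    [InnerProductSpace ℝ H] [CompleteSpace H]
    (f : H → ℝ) (f' : H → H) (L : ℝ) (hL : 0 < L)
    (hconv : ConvexOn ℝ Set.univ f)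
    (hgrad : ∀ z, HasGradientAt f (f' z) z)
    (hlip : LipschitzWith (Real.toNNReal L) f')
    (hbdd : BddBelow (Set.range f))
    (xstar : H) (hmin : ∀ z, f xstar ≤ f z)
    (r s : ℝ) (hr : 3 ≤ r) (hs : 0 < s) (hsL : s ≤ 1 / L)
    -- FISC-ns sequences; `x k` for `k : ℕ` denotes `x_k`, and `x (k-1)` with
    -- truncated subtraction encodes `x_{-1} = x₀` at `k = 0`.
    (x y rk : ℕ → H)
    (hne : ∀ k : ℕ, x k - x (k - 1) ≠ 0 → f' (x k) ≠ 0)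
    (hrk : ∀ k : ℕ, rk k = if f' (x k) ≠ 0 ∧ x k - x (k - 1) ≠ 0
        then (‖x k - x (k - 1)‖ / ‖f' (x k)‖) • f' (x k) else 0)
    (hy : ∀ k : ℕ, y k = x k + (((k : ℝ) - 1) / ((k : ℝ) - 1 + r)) • (x k - x (k - 1))
        - ((r - 3) / ((k : ℝ) - 1 + r)) • rk k)
    (hx : ∀ k : ℕ, x (k + 1) = y k - s • f' (y k))
    (z w : ℕ → H)
    (hz : ∀ k : ℕ, z k = x k + (((k : ℝ) - 1) / (r - 1)) • (x k - x (k - 1)))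
    (hw : ∀ k : ℕ, w k = z k + z (k - 1) - x k - x (k - 1))
    (k : ℕ) (hk : 1 ≤ k) :
    w k = ((2 * (k : ℝ) + r - 3) / (r - 1)) • (x k - x (k - 1))
        + ((r - 3) / (r - 1)) • rk (k - 1)
        + (((((k : ℝ) + r - 2) / (r - 1)) * s) • f' (y (k - 1))) :=
  fisc_ns_w_identity_general f' r s hr x y rk hy hx z w hz hw k hk
end

section
/- Under the FISC-ns recursion, for every k ≥ 1 the following inequality holds: φ_k‖Δx_k‖² + (r-3)‖r_{k-1}‖² + 2(r-1)ξ_k ⟨r_{k-1}, Δx_k + s∇f(y_{k-1})⟩ ≥ φ_k‖Δx_k‖² - (φ_{k-1} - 2)‖Δx_{k-1}‖². -/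
/-!
Since `x_{k+1} = y_k - s∇f(y_k)`, the vector `Δx_{k+1} + s∇f(y_k)` is just `y_k - x_k`, a combination
of `Δx_k` and `r_k` whose coefficients cancel the weight `2(r-1)ξ_{k+1} = 2(k-1+r)`. The left-hand side
minus `φ_{k+1}‖Δx_{k+1}‖²` is then `2(k-1)⟪r_k, Δx_k⟫ - (r-3)‖r_k‖²`, and Cauchy–Schwarz together with
`‖r_k‖ ≤ ‖Δx_k‖` bounds it below by `-(2k+r-5)‖Δx_k‖²`.
-/

open RealInnerProductSpace
open scoped Classical

section

variable {H : Type*} [NormedAddCommGroup H] [InnerProductSpace ℝ H]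

theorem norm_ite_div_norm_smul_le {a : ℝ} (ha : 0 ≤ a) (g : H) (c : Prop) [Decidable c]
    (hc : c → g ≠ 0) : ‖if c then (a / ‖g‖) • g else 0‖ ≤ a := by
  split_ifs with h
  · rw [norm_smul, Real.norm_eq_abs, abs_div, abs_norm, abs_of_nonneg ha,
      div_mul_cancel₀ _ (norm_ne_zero_iff.mpr (hc h))]
  · simpa using ha

theorem neg_mul_norm_sq_le_of_norm_le (d ρ : H) {t r : ℝ} (ht : 0 ≤ t) (hr : 3 ≤ r)
    (hρ : ‖ρ‖ ≤ ‖d‖) :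
    -(2 * t + r - 3) * ‖d‖ ^ 2
      ≤ (r - 3) * ‖ρ‖ ^ 2 + 2 * (t + r) * ⟪ρ, (t / (t + r)) • d - ((r - 3) / (t + r)) • ρ⟫ := by
  have htr : t + r ≠ 0 := by linarith
  have hexpand : (r - 3) * ‖ρ‖ ^ 2
      + 2 * (t + r) * ⟪ρ, (t / (t + r)) • d - ((r - 3) / (t + r)) • ρ⟫
        = 2 * t * ⟪ρ, d⟫ - (r - 3) * ‖ρ‖ ^ 2 := by
    rw [inner_sub_right, real_inner_smul_right, real_inner_smul_right,
      real_inner_self_eq_norm_sq]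
    field_simp
    ring
  have hcs : -‖d‖ ^ 2 ≤ ⟪ρ, d⟫ := by
    have := neg_le_of_abs_le (abs_real_inner_le_norm ρ d)
    nlinarith [norm_nonneg ρ, norm_nonneg d]
  have hsq : ‖ρ‖ ^ 2 ≤ ‖d‖ ^ 2 := pow_le_pow_left₀ (norm_nonneg ρ) hρ 2
  rw [hexpand]
  nlinarith

end

theorem fisc_ns_L1_part_inequality_general {H : Type*} [NormedAddCommGroup H]
    [InnerProductSpace ℝ H]
    (f' : H → H)
    (r s : ℝ) (hr : 3 ≤ r)
    -- FISC-ns sequences; `x k` for `k : ℕ` denotes `x_k`, and `x (k-1)` with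
    -- truncated subtraction encodes `x_{-1} = x₀` at `k = 0`.
    (x y rk : ℕ → H)
    (hrk : ∀ k : ℕ, rk k = if f' (x k) ≠ 0 ∧ x k - x (k - 1) ≠ 0
        then (‖x k - x (k - 1)‖ / ‖f' (x k)‖) • f' (x k) else 0)
    (hy : ∀ k : ℕ, y k = x k + (((k : ℝ) - 1) / ((k : ℝ) - 1 + r)) • (x k - x (k - 1))
        - ((r - 3) / ((k : ℝ) - 1 + r)) • rk k)
    (hx : ∀ k : ℕ, x (k + 1) = y k - s • f' (y k))
    (k : ℕ) (hk : 1 ≤ k) :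
    (2 * (k : ℝ) + r - 3) * ‖x k - x (k - 1)‖ ^ 2 + (r - 3) * ‖rk (k - 1)‖ ^ 2
        + 2 * (r - 1) * (((k : ℝ) + r - 2) / (r - 1))
          * ⟪rk (k - 1), (x k - x (k - 1)) + s • f' (y (k - 1))⟫
      ≥ (2 * (k : ℝ) + r - 3) * ‖x k - x (k - 1)‖ ^ 2
        - ((2 * ((k : ℝ) - 1) + r - 3) - 2) * ‖x (k - 1) - x (k - 1 - 1)‖ ^ 2 := by
  have hrk_le (j : ℕ) : ‖rk j‖ ≤ ‖x j - x (j - 1)‖ := by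
    rw [hrk j]
    exact norm_ite_div_norm_smul_le (norm_nonneg _) _ _ And.left
  obtain ⟨j, rfl⟩ : ∃ j, k = j + 1 := ⟨k - 1, by omega⟩
  simp only [Nat.add_sub_cancel, ge_iff_le]
  rcases Nat.eq_zero_or_pos j with rfl | hj
  · have hrk0 : rk 0 = 0 := norm_le_zero_iff.mp (by simpa using hrk_le 0)
    simp [hrk0]
  have hstep : x (j + 1) - x j + s • f' (y j)
      = (((j : ℝ) - 1) / ((j : ℝ) - 1 + r)) • (x j - x (j - 1))
        - ((r - 3) / ((j : ℝ) - 1 + r)) • rk j := by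
    rw [hx j, hy j]
    module
  have hweight : 2 * (r - 1) * ((((j + 1 : ℕ) : ℝ) + r - 2) / (r - 1)) = 2 * ((j - 1) + r) := by
    push_cast
    field_simp [show r - 1 ≠ 0 by linarith]
    ring
  have hj' : (0 : ℝ) ≤ j - 1 := by
    have : (1 : ℝ) ≤ j := by exact_mod_cast hj
    linarith
  have key := neg_mul_norm_sq_le_of_norm_le _ _ hj' hr (hrk_le j)
  rw [hweight, hstep]
  push_cast at key ⊢
  linarith

theorem fisc_ns_L1_part_inequality {H : Type*} [NormedAddCommGroup H]
    [InnerProductSpace ℝ H] [CompleteSpace H]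
    (f : H → ℝ) (f' : H → H) (L : ℝ) (hL : 0 < L)
    (hconv : ConvexOn ℝ Set.univ f)
    (hgrad : ∀ z, HasGradientAt f (f' z) z)
    (hlip : LipschitzWith (Real.toNNReal L) f')
    (hbdd : BddBelow (Set.range f))
    (xstar : H) (hmin : ∀ z, f xstar ≤ f z)
    (r s : ℝ) (hr : 3 ≤ r) (hs : 0 < s) (hsL : s ≤ 1 / L)
    -- FISC-ns sequences; `x k` for `k : ℕ` denotes `x_k`, and `x (k-1)` with
    -- truncated subtraction encodes `x_{-1} = x₀` at `k = 0`.
    (x y rk : ℕ → H)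
    (hne : ∀ k : ℕ, x k - x (k - 1) ≠ 0 → f' (x k) ≠ 0)
    (hrk : ∀ k : ℕ, rk k = if f' (x k) ≠ 0 ∧ x k - x (k - 1) ≠ 0
        then (‖x k - x (k - 1)‖ / ‖f' (x k)‖) • f' (x k) else 0)
    (hy : ∀ k : ℕ, y k = x k + (((k : ℝ) - 1) / ((k : ℝ) - 1 + r)) • (x k - x (k - 1))
        - ((r - 3) / ((k : ℝ) - 1 + r)) • rk k)
    (hx : ∀ k : ℕ, x (k + 1) = y k - s • f' (y k))
    (k : ℕ) (hk : 1 ≤ k) :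
    (2 * (k : ℝ) + r - 3) * ‖x k - x (k - 1)‖ ^ 2 + (r - 3) * ‖rk (k - 1)‖ ^ 2
        + 2 * (r - 1) * (((k : ℝ) + r - 2) / (r - 1))
          * ⟪rk (k - 1), (x k - x (k - 1)) + s • f' (y (k - 1))⟫
      ≥ (2 * (k : ℝ) + r - 3) * ‖x k - x (k - 1)‖ ^ 2
        - ((2 * ((k : ℝ) - 1) + r - 3) - 2) * ‖x (k - 1) - x (k - 1 - 1)‖ ^ 2 :=
  fisc_ns_L1_part_inequality_general f' r s hr x y rk hrk hy hx k hk
end
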